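/- arXiv:1908.04164 — 9 statements merged into one kernel-verified Lean document; each statement's English description precedes it below -/
import Mathlib

section
/- If w is a 1432-avoiding permutation in S_n with w not equal to the longest permutation, and r is the smallest index with w_r < w_{r+1}, then the permutation w·s_r (obtained by swapping the values in positions r and r+1) is also 1432-avoiding. -/
/-- `w` avoids the pattern 1432: there are no indices `i₁ < i₂ < i₃ < i₄` with
`w i₁ < w i₄ < w i₃ < w i₂`. -/
def Avoids1432 {n : ℕ} (w : Equiv.Perm (Fin n)) : Prop :=
  ¬ ∃ i1 i2 i3 i4 : Fin n, i1 < i2 ∧ i2 < i3 ∧ i3 < i4 ∧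
      w i1 < w i4 ∧ w i4 < w i3 ∧ w i3 < w i2

/-!
Swapping the adjacent positions `r, r + 1` preserves the relative order of every pair of
positions other than that pair, so a 1432 pattern of `w·s_r` is one of `w` unless `r, r + 1`
carry two consecutive letters of it. Because `w` decreases on `0, …, r`, none of the three
placements survives: as the letters `1, 4` they would need `w_{r+1} < w_r`; as `4, 3` the letter
`1` sits before `r` and so above `w_r`; as `3, 2` the letters `1, 4` both sit before `r`.
-/

theorem Fin.strictAntiOn_Iic_of_val_succ_lt {α : Type*} [Preorder α] {n : ℕ} (f : Fin n → α)
    (r : ℕ) (hr : r < n) (h : ∀ s (hs : s < r), f ⟨s + 1, by omega⟩ < f ⟨s, by omega⟩) :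
    StrictAntiOn f (Set.Iic ⟨r, hr⟩) := by
  refine strictAntiOn_Iic_of_succ_lt fun m (hm : (m : ℕ) < r) => ?_
  have hcov : m ⋖ ⟨m + 1, by omega⟩ :=
    ⟨Nat.lt_succ_self _, fun c (h1 : (m : ℕ) < c) (h2 : (c : ℕ) < m + 1) => by omega⟩
  rw [Order.succ_eq_of_covBy hcov]
  exact h m hm

theorem Fin.swap_lt_swap_of_adjacent {n : ℕ} {a b i j : Fin n} (hab : (a : ℕ) + 1 = b)
    (hij : i < j) (hne : ¬(i = a ∧ j = b)) : Equiv.swap a b i < Equiv.swap a b j := by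
  simp only [Equiv.swap_apply_def, Fin.ext_iff, Fin.lt_def] at hij hne ⊢
  split_ifs <;> omega

/-- If `w` is a 1432-avoiding permutation, not the longest permutation, and `r`
is its first ascent, then `w·s_r` is also 1432-avoiding. (Positions are 0-based.) -/
theorem stmt0 {n : ℕ} (w : Equiv.Perm (Fin n)) (hw : Avoids1432 w)
    (r : ℕ) (hr : r + 1 < n)
    (hasc : w ⟨r, by omega⟩ < w ⟨r + 1, hr⟩)
    (hmin : ∀ s : ℕ, ∀ hs : s < r, w ⟨s + 1, by omega⟩ < w ⟨s, by omega⟩) :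
    Avoids1432 (w * Equiv.swap (⟨r, by omega⟩ : Fin n) ⟨r + 1, hr⟩) := by
  set a : Fin n := ⟨r, by omega⟩
  set b : Fin n := ⟨r + 1, hr⟩
  have hdesc : StrictAntiOn w (Set.Iic a) := Fin.strictAntiOn_Iic_of_val_succ_lt w r _ hmin
  have hfix : ∀ i < a, Equiv.swap a b i = i := fun i hi =>
    Equiv.swap_apply_of_ne_of_ne hi.ne (hi.trans (Fin.lt_def.2 (Nat.lt_succ_self r))).ne
  rintro ⟨i1, i2, i3, i4, h12, h23, h34, h14, h43, h32⟩
  simp only [Equiv.Perm.mul_apply] at h14 h43 h32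
  by_cases c12 : i1 = a ∧ i2 = b
  · obtain ⟨rfl, rfl⟩ := c12
    rw [Equiv.swap_apply_left] at h14
    rw [Equiv.swap_apply_right] at h32
    exact hasc.not_gt (h14.trans (h43.trans h32))
  by_cases c23 : i2 = a ∧ i3 = b
  · obtain ⟨rfl, rfl⟩ := c23
    rw [Equiv.swap_apply_right] at h43
    rw [hfix i1 h12] at h14
    exact (hdesc h12.le (Set.mem_Iic.2 le_rfl) h12).not_gt (h14.trans h43)
  by_cases c34 : i3 = a ∧ i4 = b
  · obtain ⟨rfl, rfl⟩ := c34
    rw [hfix i1 (h12.trans h23)] at h14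
    rw [hfix i2 h23] at h32
    exact (hdesc (h12.trans h23).le h23.le h12).not_gt (h14.trans (h43.trans h32))
  exact hw ⟨_, _, _, _, Fin.swap_lt_swap_of_adjacent rfl h12 c12,
    Fin.swap_lt_swap_of_adjacent rfl h23 c23, Fin.swap_lt_swap_of_adjacent rfl h34 c34,
    h14, h43, h32⟩
end

section
/- Let w ∈ S_n be a 321-avoiding permutation and let (i,j) ∈ D(w). Then m_{ij}(w) = j − |{t : t < i and w_t ≤ j}|, equivalently j − |{t : t < w_t ≤ j}| − |{t : w_t ≤ t < i}| = m_{ij}(w). -/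
open Finset

/-- The Rothe diagram of `w` (0-based): squares `(i,j)` with `w i > j` and `w⁻¹ j > i`. -/
def RD {n : ℕ} (w : Equiv.Perm (Fin n)) : Finset (Fin n × Fin n) :=
  Finset.univ.filter (fun p => p.2 < w p.1 ∧ p.1 < w⁻¹ p.2)

/-- `m_{ij}(w)`: the number of squares of `D(w)` in row `i` weakly left of column `j`. -/
def mStat {n : ℕ} (w : Equiv.Perm (Fin n)) (i j : Fin n) : ℕ :=
  ((RD w).filter (fun p => p.1 = i ∧ p.2 ≤ j)).card

/-- `w` avoids the pattern 321. -/
def Avoids321 {n : ℕ} (w : Equiv.Perm (Fin n)) : Prop :=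
  ¬ ∃ i1 i2 i3 : Fin n, i1 < i2 ∧ i2 < i3 ∧ w i3 < w i2 ∧ w i2 < w i1

lemma perm_apply_inv_self {n : ℕ} (w : Equiv.Perm (Fin n)) (k : Fin n) : w (w⁻¹ k) = k :=
  (Equiv.eq_symm_apply w).mp rfl

lemma perm_inv_apply_self {n : ℕ} (w : Equiv.Perm (Fin n)) (k : Fin n) : w⁻¹ (w k) = k :=
  Equiv.Perm.inv_eq_iff_eq.mpr rfl

/-- If `t < w t` there is a later position with a smaller value. -/
lemma exists_after {n : ℕ} (w : Equiv.Perm (Fin n)) {t : Fin n} (h : t < w t) :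
    ∃ u, t < u ∧ w u < w t := by
  by_contra hc
  push_neg at hc
  have key : ∀ v : Fin n, v < w t → w⁻¹ v < t := by
    intro v hv
    rcases lt_trichotomy (w⁻¹ v) t with h1 | h1 | h1
    · exact h1
    · exfalso
      have : v = w t := by
        conv_lhs => rw [← perm_apply_inv_self w v, h1]
      exact absurd hv (by simp [this])
    · exfalso
      have := hc _ h1
      rw [perm_apply_inv_self w] at this
      exact absurd hv (not_lt.2 this)
  have hle : (Finset.Iio (w t)).card ≤ (Finset.Iio t).card := by
    apply Finset.card_le_card_of_injOn (fun v => w⁻¹ v)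
    · intro v hv
      simp only [Finset.mem_coe, Finset.mem_Iio] at *
      exact key v hv
    · intro a _ b _ hab
      exact (Equiv.injective w⁻¹) hab
  rw [Fin.card_Iio, Fin.card_Iio] at hle
  exact absurd h (not_lt.2 (Fin.le_def.2 hle))

/-- For a 321-avoiding `w` and `(i,j) ∈ D(w)` (0-based; 1-based `j` is `j+1`):
`m_{ij}(w) = j − |{t < i : w_t ≤ j}|` and
`j − |{t : t < w_t ≤ j}| − |{t : w_t ≤ t < i}| = m_{ij}(w)`. -/
theorem stmt2 {n : ℕ} (w : Equiv.Perm (Fin n)) (h321 : Avoids321 w)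
    (i j : Fin n) (hij : (i, j) ∈ RD w) :
    mStat w i j
      = (j : ℕ) + 1 - (Finset.univ.filter (fun t : Fin n => t < i ∧ w t ≤ j)).card ∧
    (j : ℕ) + 1 - (Finset.univ.filter (fun t : Fin n => t < w t ∧ w t ≤ j)).card
        - (Finset.univ.filter (fun t : Fin n => w t ≤ t ∧ t < i)).card
      = mStat w i j := by
  unfold Avoids321 at h321
  push_neg at h321
  simp only [RD, Finset.mem_filter, Finset.mem_univ, true_and] at hij
  obtain ⟨hji, hiw⟩ := hij
  have hji : j < w i := hji
  have hiw : i < w⁻¹ j := hiw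
  set S := Finset.univ.filter (fun t : Fin n => t < i ∧ w t ≤ j) with hS
  set A := Finset.univ.filter (fun t : Fin n => t < w t ∧ w t ≤ j) with hA
  set B := Finset.univ.filter (fun t : Fin n => w t ≤ t ∧ t < i) with hB
  set T := Finset.univ.filter (fun k : Fin n => k ≤ j ∧ i < w⁻¹ k) with hT
  set C := Finset.univ.filter (fun k : Fin n => k ≤ j ∧ w⁻¹ k < i) with hC
  -- claim 1 : t < w t, w t ≤ j → t < i
  have claim1 : ∀ t : Fin n, t < w t → w t ≤ j → t < i := by
    intro t ht1 ht2
    by_contra hti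
    push_neg at hti
    have hne : i ≠ t := by
      intro h
      subst h
      exact absurd ht2 (not_le.2 hji)
    have hit : i < t := lt_of_le_of_ne hti hne
    obtain ⟨u, htu, hu⟩ := exists_after w ht1
    exact absurd (lt_of_le_of_lt ht2 hji) (not_lt.2 (h321 i t u hit htu hu))
  -- claim 2 : w t ≤ t, t < i → w t ≤ j
  have claim2 : ∀ t : Fin n, w t ≤ t → t < i → w t ≤ j := by
    intro t ht1 ht2
    by_contra hjt
    push_neg at hjt
    have hts : t < w⁻¹ j := lt_trans ht2 hiw
    by_cases hu : ∃ u, u < t ∧ w t < w u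
    · obtain ⟨u, hut, hwu⟩ := hu
      exact absurd hwu (not_lt.2 (h321 u t (w⁻¹ j) hut hts (by rwa [perm_apply_inv_self w])))
    · push_neg at hu
      have hall : ∀ u, u < t → w u < w t := by
        intro u hut
        refine lt_of_le_of_ne (hu u hut) ?_
        intro h
        exact absurd (w.injective h) (ne_of_lt hut)
      have hle : (Finset.Iio t).card ≤ (Finset.Iio (w t)).card := by
        apply Finset.card_le_card_of_injOn (fun u => w u)
        · intro u huu
          simp only [Finset.mem_coe, Finset.mem_Iio] at *
          exact hall u huu
        · intro a _ b _ hab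
          exact w.injective hab
      rw [Fin.card_Iio, Fin.card_Iio] at hle
      have hwt : w t = t := le_antisymm ht1 (Fin.le_def.2 hle)
      -- image of Iio t under w is Iio t
      have himg : (Finset.Iio t).image w = Finset.Iio t := by
        apply Finset.eq_of_subset_of_card_le
        · intro v hv
          simp only [Finset.mem_image, Finset.mem_Iio] at hv ⊢
          obtain ⟨u, hu1, hu2⟩ := hv
          rw [← hu2]
          exact hwt ▸ hall u hu1
        · rw [Finset.card_image_of_injective _ w.injective]
      have hjmem : j ∈ (Finset.Iio t).image w := by
        rw [himg, Finset.mem_Iio, ← hwt]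
        exact hjt
      simp only [Finset.mem_image, Finset.mem_Iio] at hjmem
      obtain ⟨u, hu1, hu2⟩ := hjmem
      have : w⁻¹ j = u := by rw [← hu2]; exact perm_inv_apply_self w u
      rw [this] at hiw
      exact absurd (lt_trans hu1 ht2) (not_lt.2 (le_of_lt hiw))
  -- mStat = T.card
  have h1 : mStat w i j = T.card := by
    unfold mStat RD
    apply Finset.card_nbij' (fun p => p.2) (fun k => (i, k))
    · intro p hp
      simp only [hT, Finset.mem_coe, Finset.mem_filter, Finset.mem_univ, true_and] at hp ⊢
      obtain ⟨⟨_, hp2⟩, hp3, hp4⟩ := hp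
      exact ⟨hp4, hp3 ▸ hp2⟩
    · intro k hk
      simp only [hT, Finset.mem_coe, Finset.mem_filter, Finset.mem_univ, true_and] at hk ⊢
      exact ⟨⟨lt_of_le_of_lt hk.1 hji, hk.2⟩, hk.1⟩
    · intro p hp
      simp only [Finset.mem_coe, Finset.mem_filter] at hp
      obtain ⟨_, hp3, _⟩ := hp
      ext <;> simp [hp3]
    · intro k _
      rfl
  -- S.card = C.card
  have h2 : S.card = C.card := by
    apply Finset.card_nbij' (fun t => w t) (fun k => w⁻¹ k)
    · intro t ht
      simp only [hS, hC, Finset.mem_coe, Finset.mem_filter, Finset.mem_univ, true_and] at ht ⊢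
      exact ⟨ht.2, by rw [perm_inv_apply_self w]; exact ht.1⟩
    · intro k hk
      simp only [hS, hC, Finset.mem_coe, Finset.mem_filter, Finset.mem_univ, true_and] at hk ⊢
      exact ⟨hk.2, by rw [perm_apply_inv_self w]; exact hk.1⟩
    · intro t _
      exact perm_inv_apply_self w t
    · intro k _
      exact perm_apply_inv_self w k
  -- T.card + C.card = j + 1
  have h3 : T.card + C.card = (j : ℕ) + 1 := by
    rw [← Finset.card_union_of_disjoint]
    · have : T ∪ C = Finset.Iic j := by
        ext k
        simp only [hT, hC, Finset.mem_union, Finset.mem_filter, Finset.mem_univ, true_and,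
          Finset.mem_Iic]
        constructor
        · rintro (⟨h, _⟩ | ⟨h, _⟩) <;> exact h
        · intro hk
          have hne : w⁻¹ k ≠ i := by
            intro h
            have : k = w i := by rw [← perm_apply_inv_self w k, h]
            exact absurd (lt_of_le_of_lt hk hji) (by simp [this])
          rcases lt_or_gt_of_ne hne with h | h
          · exact Or.inr ⟨hk, h⟩
          · exact Or.inl ⟨hk, h⟩
      rw [this, Fin.card_Iic]
    · rw [Finset.disjoint_filter]
      rintro k _ ⟨_, h1⟩ ⟨_, h2⟩
      exact absurd h2 (not_lt.2 (le_of_lt h1))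
  -- S.card = A.card + B.card
  have h4 : S.card = A.card + B.card := by
    rw [← Finset.card_union_of_disjoint]
    · congr 1
      ext t
      simp only [hS, hA, hB, Finset.mem_union, Finset.mem_filter, Finset.mem_univ, true_and]
      constructor
      · rintro ⟨ht1, ht2⟩
        rcases le_or_gt (w t) t with h | h
        · exact Or.inr ⟨h, ht1⟩
        · exact Or.inl ⟨h, ht2⟩
      · rintro (⟨ht1, ht2⟩ | ⟨ht1, ht2⟩)
        · exact ⟨claim1 t ht1 ht2, ht2⟩
        · exact ⟨ht2, claim2 t ht1 ht2⟩
    · rw [Finset.disjoint_filter]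
      rintro k _ ⟨h1, _⟩ ⟨h2, _⟩
      exact absurd h2 (not_le.2 h1)
  refine ⟨?_, ?_⟩ <;> omega
end

section
/- If w is 321-avoiding, then for any t with t < w_t ≤ j and any (i,j) ∈ D(w), one has t < i; moreover if w_t ≤ t < i and (i,j) ∈ D(w), then w_t ≤ j. -/
open Finset

/-! Both parts are pigeonhole arguments producing the missing entry of a 321 pattern. In the
first, `i < t` would give `w t < w i`, and an excedance `t < w t` forces some `s > t` with
`w s < w t`, since the `n - 1 - t` positions after `t` do not fit into the values above `w t`.
In the second, `j < w t` would give `t < w⁻¹ j` with `w (w⁻¹ j) < w t`, and then the `t + 1`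
positions before `t` together with `w⁻¹ j` do not fit into the `w t ≤ t` values below `w t`, so
some `s < t` has `w t < w s`. -/

theorem Fin.exists_lt_apply_lt_of_lt_apply {n : ℕ} {f : Fin n → Fin n} (hf : f.Injective)
    {t : Fin n} (ht : t < f t) : ∃ s, t < s ∧ f s < f t := by
  by_contra! h
  have hmaps : ∀ s ∈ Finset.Ioi t, f s ∈ Finset.Ioi (f t) := fun s hs => by
    rw [Finset.mem_Ioi] at hs ⊢
    exact (h s hs).lt_of_ne fun he => hs.ne (hf he)
  have hcard := Finset.card_le_card_of_injOn f hmaps hf.injOn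
  rw [Fin.card_Ioi, Fin.card_Ioi] at hcard
  have : (f t : ℕ) < n := (f t).isLt
  have : (t : ℕ) < f t := ht
  omega

theorem Fin.exists_lt_apply_gt_of_apply_le {n m : ℕ} {f : Fin n → Fin m} (hf : f.Injective)
    {t k : Fin n} (ht : (f t : ℕ) ≤ t) (htk : t < k) (hk : f k < f t) :
    ∃ s, s < t ∧ f t < f s := by
  by_contra! h
  have hmaps : ∀ s ∈ insert k (Finset.Iio t), f s ∈ Finset.Iio (f t) := fun s hs => by
    rw [Finset.mem_insert, Finset.mem_Iio] at hs
    rw [Finset.mem_Iio]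
    rcases hs with rfl | hs
    · exact hk
    · exact (h s hs).lt_of_ne fun he => hs.ne (hf he)
  have hcard := Finset.card_le_card_of_injOn f hmaps hf.injOn
  rw [Finset.card_insert_of_notMem (by simpa using htk.le), Fin.card_Iio, Fin.card_Iio] at hcard
  omega

/-- For 321-avoiding `w` and `(i,j) ∈ D(w)`: if `t < w_t ≤ j` then `t < i`;
and if `w_t ≤ t < i` then `w_t ≤ j`. -/
theorem stmt3 {n : ℕ} (w : Equiv.Perm (Fin n)) (h321 : Avoids321 w)
    (i j : Fin n) (hij : (i, j) ∈ RD w) :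
    (∀ t : Fin n, t < w t → w t ≤ j → t < i) ∧
    (∀ t : Fin n, w t ≤ t → t < i → w t ≤ j) := by
  obtain ⟨hj, hi⟩ : j < w i ∧ i < w⁻¹ j := by simpa [RD] using hij
  constructor
  · intro t htw hwj
    by_contra! hit
    have hit : i < t := hit.lt_of_ne (by rintro rfl; exact (hwj.trans_lt hj).false)
    obtain ⟨s, hts, hws⟩ := Fin.exists_lt_apply_lt_of_lt_apply w.injective htw
    exact h321 ⟨i, t, s, hit, hts, hws, hwj.trans_lt hj⟩
  · intro t hwt hti
    by_contra! hjw
    have htk : t < w⁻¹ j := hti.trans hi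
    obtain ⟨s, hst, hws⟩ :=
      Fin.exists_lt_apply_gt_of_apply_le w.injective hwt htk (by simpa using hjw)
    exact h321 ⟨s, t, w⁻¹ j, hst, htk, by simpa using hjw, hws⟩
end

section
/- Let w ∈ S_n and let T be a set-valued Rothe tableau of shape D(w) flagged by (1,2,...,n). If (i,j) ∈ D(w) and every row index t with 1 ≤ t < i satisfies (t,j) ∈ D(w), then T(t,j) = {t} for all 1 ≤ t ≤ i. -/
/-! Going down a column of `D(w)` from the first row, entries are `≥ 1` and strictly increase,
so every entry in row `t` is `≥ t + 1`; the flag bounds it by `t + 1`. -/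

open Finset

/-- A set-valued Rothe tableau of shape `D(w)` flagged by `(1,2,…,n)`:
each square of `D(w)` carries a finite nonempty set of positive integers,
rows are weakly decreasing (for `j < j'` in a row, `max T(i,j') ≤ min T(i,j)`),
columns are strictly increasing, and every entry in (0-based) row `i` is `≤ i+1`. -/
def IsSVRT {n : ℕ} (w : Equiv.Perm (Fin n)) (T : Fin n × Fin n → Finset ℕ) : Prop :=
  (∀ p ∈ RD w, (T p).Nonempty) ∧
  (∀ i j j' : Fin n, j < j' → (i, j) ∈ RD w → (i, j') ∈ RD w →
      ∀ a ∈ T (i, j'), ∀ b ∈ T (i, j), a ≤ b) ∧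
  (∀ i i' j : Fin n, i < i' → (i, j) ∈ RD w → (i', j) ∈ RD w →
      ∀ a ∈ T (i, j), ∀ b ∈ T (i', j), a < b) ∧
  (∀ p ∈ RD w, ∀ a ∈ T p, 1 ≤ a ∧ a ≤ (p.1 : ℕ) + 1)

theorem IsSVRT.add_one_le_of_mem_of_column {n : ℕ} {w : Equiv.Perm (Fin n)}
    {T : Fin n × Fin n → Finset ℕ} (hT : IsSVRT w T) {j : Fin n} (t : Fin n)
    (hcol : ∀ s ≤ t, (s, j) ∈ RD w) : ∀ a ∈ T (t, j), (t : ℕ) + 1 ≤ a := by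
  obtain ⟨hne, -, hcolT, hflag⟩ := hT
  induction t using WellFoundedLT.induction with
  | _ t ih =>
    intro a ha
    rcases Nat.eq_zero_or_pos (t : ℕ) with ht0 | ht0
    · have := (hflag _ (hcol t le_rfl) a ha).1
      omega
    · let s : Fin n := ⟨t - 1, by omega⟩
      have hst : s < t := Fin.lt_def.2 (by simp only [s]; omega)
      have hcol_s : ∀ r ≤ s, (r, j) ∈ RD w := fun r hr => hcol r (hr.trans hst.le)
      obtain ⟨b, hb⟩ := hne _ (hcol_s s le_rfl)
      have hsb : (s : ℕ) + 1 ≤ b := ih s hst hcol_s b hb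
      have hba : b < a := hcolT s t j hst (hcol_s s le_rfl) (hcol t le_rfl) b hb a ha
      simp only [s] at hsb
      omega

theorem IsSVRT.eq_singleton_of_column {n : ℕ} {w : Equiv.Perm (Fin n)}
    {T : Fin n × Fin n → Finset ℕ} (hT : IsSVRT w T) {j : Fin n} (t : Fin n)
    (hcol : ∀ s ≤ t, (s, j) ∈ RD w) : T (t, j) = {(t : ℕ) + 1} :=
  eq_singleton_iff_nonempty_unique_mem.2
    ⟨hT.1 _ (hcol t le_rfl), fun a ha =>
      le_antisymm (hT.2.2.2 _ (hcol t le_rfl) a ha).2 (hT.add_one_le_of_mem_of_column t hcol a ha)⟩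

/-- If `(i,j) ∈ D(w)` and every square `(t,j)` with `t < i` is in `D(w)`, then
`T(t,j) = {t}` (1-based value `t+1` for 0-based row `t`) for all `t ≤ i`. -/
theorem stmt5 {n : ℕ} (w : Equiv.Perm (Fin n)) (T : Fin n × Fin n → Finset ℕ)
    (hT : IsSVRT w T) (i j : Fin n) (hij : (i, j) ∈ RD w)
    (hcol : ∀ t : Fin n, t < i → (t, j) ∈ RD w) :
    ∀ t : Fin n, t ≤ i → T (t, j) = {(t : ℕ) + 1} := by
  intro t ht
  refine hT.eq_singleton_of_column t fun s hs => ?_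
  rcases (hs.trans ht).lt_or_eq with hsi | rfl
  · exact hcol s hsi
  · exact hij
end

section
/- Let w ∈ S_n be 1432-avoiding, let T be a set-valued Rothe tableau of shape D(w) flagged by (1,...,n), and fix r ≥ 1. Define E(T) to be the set of squares B of D(w) with T(B) ∩ {r, r+1} ≠ ∅, P(T) the squares of E(T) whose column contains exactly one square of E(T), and Q(T) = E(T) \ P(T). Then for any (i,j) ∈ P(T), there do not exist squares (i,k) and (h,k) in Q(T) with k > j and h < i. -/
open Finset

/-- `E(T)`: the squares of `D(w)` whose set contains `r` or `r+1`. -/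
def Eset {n : ℕ} (w : Equiv.Perm (Fin n)) (T : Fin n × Fin n → Finset ℕ) (r : ℕ) :
    Finset (Fin n × Fin n) :=
  (RD w).filter (fun p => r ∈ T p ∨ r + 1 ∈ T p)

/-- `P(T)`: squares of `E(T)` that are alone in their column within `E(T)`. -/
def Pset {n : ℕ} (w : Equiv.Perm (Fin n)) (T : Fin n × Fin n → Finset ℕ) (r : ℕ) :
    Finset (Fin n × Fin n) :=
  (Eset w T r).filter (fun p => ∀ q ∈ Eset w T r, q.2 = p.2 → q = p)

/-- `Q(T) = E(T) \ P(T)`. -/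
def Qset {n : ℕ} (w : Equiv.Perm (Fin n)) (T : Fin n × Fin n → Finset ℕ) (r : ℕ) :
    Finset (Fin n × Fin n) :=
  Eset w T r \ Pset w T r

/-! If `(h,k)` and `(i,k)` both lie in `E(T)` with `h < i`, column strictness forces `r ∈ T(h,k)`
and `r + 1 ∈ T(i,k)`. For `(i,j) ∈ E(T)` with `j < k`, the row condition then gives
`r + 1 ∈ T(i,j)`, and the corner `(h,j)`, which lies in `D(w)`, has its entries squeezed between
`r` (row `h`) and `r + 1` (column `j`), so `T(h,j) = {r}` and `(h,j) ∈ E(T)`: the square `(i,j)` is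
not alone in its column. -/

theorem mem_RD {n : ℕ} {w : Equiv.Perm (Fin n)} {p : Fin n × Fin n} :
    p ∈ RD w ↔ p.2 < w p.1 ∧ p.1 < w⁻¹ p.2 := by
  simp [RD]

theorem mem_RD_corner {n : ℕ} {w : Equiv.Perm (Fin n)} {h i j k : Fin n}
    (hhi : h < i) (hjk : j < k) (hhk : (h, k) ∈ RD w) (hij : (i, j) ∈ RD w) :
    (h, j) ∈ RD w :=
  mem_RD.2 ⟨hjk.trans (mem_RD.1 hhk).1, hhi.trans (mem_RD.1 hij).2⟩

namespace IsSVRT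

variable {n : ℕ} {w : Equiv.Perm (Fin n)} {T : Fin n × Fin n → Finset ℕ} {r : ℕ}

theorem mem_of_mem_Eset_of_lt (hT : IsSVRT w T) {h i k : Fin n} (hhi : h < i)
    (hhk : (h, k) ∈ Eset w T r) (hik : (i, k) ∈ Eset w T r) :
    r ∈ T (h, k) ∧ r + 1 ∈ T (i, k) := by
  simp only [Eset, mem_filter] at hhk hik
  have hcol := hT.2.2.1 h i k hhi hhk.1 hik.1
  rcases hhk.2 with hr | hr <;> rcases hik.2 with hr' | hr' <;>
    first
    | exact ⟨hr, hr'⟩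
    | exact absurd (hcol _ hr _ hr') (by omega)

theorem mem_Eset_corner (hT : IsSVRT w T) {h i j k : Fin n} (hhi : h < i) (hjk : j < k)
    (hij : (i, j) ∈ Eset w T r) (hhk : (h, k) ∈ Eset w T r) (hik : (i, k) ∈ Eset w T r) :
    (h, j) ∈ Eset w T r := by
  obtain ⟨hr_hk, hr_ik⟩ := hT.mem_of_mem_Eset_of_lt hhi hhk hik
  simp only [Eset, mem_filter] at hij hhk hik ⊢
  have hhj : (h, j) ∈ RD w := mem_RD_corner hhi hjk hhk.1 hij.1
  have hr_ij : r + 1 ∈ T (i, j) := by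
    rcases hij.2 with hr | hr
    · exact absurd (hT.2.1 i j k hjk hij.1 hik.1 _ hr_ik _ hr) (by omega)
    · exact hr
  obtain ⟨a, ha⟩ := hT.1 _ hhj
  have hle := hT.2.1 h j k hjk hhj hhk.1 _ hr_hk _ ha
  have hlt := hT.2.2.1 h i j hhi hhj hij.1 _ ha _ hr_ij
  obtain rfl : a = r := by omega
  exact ⟨hhj, Or.inl ha⟩

end IsSVRT

theorem stmt7_general {n : ℕ} (w : Equiv.Perm (Fin n))
    (T : Fin n × Fin n → Finset ℕ) (hT : IsSVRT w T)
    (r : ℕ) (i j : Fin n) (hP : (i, j) ∈ Pset w T r) :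
    ¬ ∃ h k : Fin n, (i, k) ∈ Qset w T r ∧ (h, k) ∈ Qset w T r ∧ j < k ∧ h < i := by
  rintro ⟨h, k, hik, hhk, hjk, hhi⟩
  obtain ⟨hij, halone⟩ := mem_filter.1 hP
  have hhj : (h, j) ∈ Eset w T r :=
    hT.mem_Eset_corner hhi hjk hij (mem_sdiff.1 hhk).1 (mem_sdiff.1 hik).1
  exact hhi.ne (Prod.ext_iff.1 (halone _ hhj rfl)).1

/-- For `(i,j) ∈ P(T)` there are no squares `(i,k), (h,k) ∈ Q(T)` with
`k > j` and `h < i`. -/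
theorem stmt7 {n : ℕ} (w : Equiv.Perm (Fin n)) (hw : Avoids1432 w)
    (T : Fin n × Fin n → Finset ℕ) (hT : IsSVRT w T)
    (r : ℕ) (hr : 1 ≤ r) (i j : Fin n) (hP : (i, j) ∈ Pset w T r) :
    ¬ ∃ h k : Fin n, (i, k) ∈ Qset w T r ∧ (h, k) ∈ Qset w T r ∧ j < k ∧ h < i :=
  stmt7_general w T hT r i j hP
end

section
/- The polynomial Σ_{k=1}^m ∏_{j=1}^{k−1}(x_r ⊕ y_{a_j}) ∏_{j=k+1}^m (x_{r+1} ⊕ y_{a_j}) − Σ_{k=1}^{m−1} ∏_{j=1}^k (x_r ⊕ y_{a_j}) ∏_{j=k+1}^m (x_{r+1} ⊕ y_{a_j}) is symmetric in x_r and x_{r+1}. -/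
/-!
Write `c_j = y_{a_j}` and `P(u) = ∏_{j ≤ m} (u ⊕ c_j)`. Since `1 - u ⊕ w = (1 - u)(1 - w)`,
the two sums combine into `P(u) + (1 - u) D(u, v)`, where
`D(u, v) = Σ_k P_{k-1}(u) (1 - c_k) ∏_{j > k} (v ⊕ c_j)`.
Because `v ⊕ w - u ⊕ w = (v - u)(1 - w)`, the sum `(v - u) D(u, v)` telescopes to `P(v) - P(u)`:
`D` is the divided difference of `P`, hence symmetric, and the polynomial is formally
`((1 - u) P(v) - (1 - v) P(u)) / (v - u)`.
-/

open Finset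

/-- `x ⊕ y = x + y − x·y`. -/
def oplus {R : Type*} [CommRing R] (u v : R) : R := u + v - u * v

section OplusProd

variable {R : Type*} [CommRing R] (c : ℕ → R)

lemma one_sub_oplus (u w : R) : 1 - oplus u w = (1 - u) * (1 - w) := by
  unfold oplus; ring

lemma oplus_sub_oplus (u v w : R) : oplus v w - oplus u w = (v - u) * (1 - w) := by
  unfold oplus; ring

def oplusProd (u : R) (n : ℕ) : R := ∏ j ∈ Icc 1 n, oplus u (c j)

lemma oplusProd_succ (u : R) (n : ℕ) :
    oplusProd c u (n + 1) = oplusProd c u n * oplus u (c (n + 1)) :=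
  prod_Icc_succ_top (by omega) _

def oplusProdDivDiff (u v : R) (m : ℕ) : R :=
  ∑ k ∈ Icc 1 m, oplusProd c u (k - 1) * (1 - c k) * ∏ j ∈ Icc (k + 1) m, oplus v (c j)

lemma oplusProdDivDiff_succ (u v : R) (m : ℕ) :
    oplusProdDivDiff c u v (m + 1) =
      oplusProdDivDiff c u v m * oplus v (c (m + 1)) + oplusProd c u m * (1 - c (m + 1)) := by
  unfold oplusProdDivDiff
  rw [sum_Icc_succ_top (by omega), sum_mul, Icc_eq_empty_of_lt (Nat.lt_succ_self _), prod_empty,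
    mul_one, Nat.add_sub_cancel]
  congr 1
  refine sum_congr rfl fun k hk => ?_
  rw [prod_Icc_succ_top (by simp at hk; omega), mul_assoc (_ * _)]

lemma sub_mul_oplusProdDivDiff (u v : R) (m : ℕ) :
    (v - u) * oplusProdDivDiff c u v m = oplusProd c v m - oplusProd c u m := by
  induction m with
  | zero => simp [oplusProdDivDiff, oplusProd]
  | succ m ih =>
    rw [oplusProdDivDiff_succ, oplusProd_succ, oplusProd_succ]
    linear_combination oplus v (c (m + 1)) * ih - oplusProd c u m * oplus_sub_oplus u v (c (m + 1))

lemma oplusProdDivDiff_comm (u v : R) (m : ℕ) :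
    oplusProdDivDiff c u v m = oplusProdDivDiff c v u m := by
  induction m with
  | zero => simp [oplusProdDivDiff]
  | succ m ih =>
    rw [oplusProdDivDiff_succ, oplusProdDivDiff_succ, ← ih]
    linear_combination (1 - c (m + 1)) * sub_mul_oplusProdDivDiff c u v m +
      oplusProdDivDiff c u v m * oplus_sub_oplus u v (c (m + 1))

lemma sum_sub_sum_eq_oplusProd_add (u v : R) (n : ℕ) :
    (∑ k ∈ Icc 1 (n + 1),
        (∏ j ∈ Icc 1 (k - 1), oplus u (c j)) * ∏ j ∈ Icc (k + 1) (n + 1), oplus v (c j)) -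
      ∑ k ∈ Icc 1 n,
        (∏ j ∈ Icc 1 k, oplus u (c j)) * ∏ j ∈ Icc (k + 1) (n + 1), oplus v (c j) =
      oplusProd c u (n + 1) + (1 - u) * oplusProdDivDiff c u v (n + 1) := by
  have hlast : ∑ k ∈ Icc 1 (n + 1),
      oplusProd c u k * ∏ j ∈ Icc (k + 1) (n + 1), oplus v (c j) =
        (∑ k ∈ Icc 1 n, oplusProd c u k * ∏ j ∈ Icc (k + 1) (n + 1), oplus v (c j)) +
          oplusProd c u (n + 1) := by
    rw [sum_Icc_succ_top (by omega), Icc_eq_empty_of_lt (Nat.lt_succ_self _), prod_empty, mul_one]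
  have hstep : ∀ k ∈ Icc 1 (n + 1), oplusProd c u (k - 1) - oplusProd c u k =
      (1 - u) * (oplusProd c u (k - 1) * (1 - c k)) := by
    intro k hk
    obtain ⟨k, rfl⟩ : ∃ i, k = i + 1 := ⟨k - 1, by simp at hk; omega⟩
    rw [oplusProd_succ, Nat.add_sub_cancel]
    linear_combination oplusProd c u k * one_sub_oplus u (c (k + 1))
  have hcombine :
      ∑ k ∈ Icc 1 (n + 1), oplusProd c u (k - 1) * ∏ j ∈ Icc (k + 1) (n + 1), oplus v (c j)
        - ∑ k ∈ Icc 1 (n + 1), oplusProd c u k * ∏ j ∈ Icc (k + 1) (n + 1), oplus v (c j) =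
          (1 - u) * oplusProdDivDiff c u v (n + 1) := by
    rw [oplusProdDivDiff, mul_sum, ← sum_sub_distrib]
    refine sum_congr rfl fun k hk => ?_
    rw [← sub_mul, hstep k hk, mul_assoc]
  unfold oplusProd at hcombine hlast ⊢
  linear_combination hcombine + hlast

end OplusProd

theorem stmt12_general {R : Type*} [CommRing R] (m : ℕ) (y : ℕ → R) (aseq : ℕ → ℕ)
    (u v : R) :
    ((∑ k ∈ Icc 1 m,
        (∏ j ∈ Icc 1 (k - 1), oplus u (y (aseq j))) *
          ∏ j ∈ Icc (k + 1) m, oplus v (y (aseq j))) -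
      ∑ k ∈ Icc 1 (m - 1),
        (∏ j ∈ Icc 1 k, oplus u (y (aseq j))) *
          ∏ j ∈ Icc (k + 1) m, oplus v (y (aseq j)))
    =
    ((∑ k ∈ Icc 1 m,
        (∏ j ∈ Icc 1 (k - 1), oplus v (y (aseq j))) *
          ∏ j ∈ Icc (k + 1) m, oplus u (y (aseq j))) -
      ∑ k ∈ Icc 1 (m - 1),
        (∏ j ∈ Icc 1 k, oplus v (y (aseq j))) *
          ∏ j ∈ Icc (k + 1) m, oplus u (y (aseq j))) := by
  obtain _ | n := m
  · simp
  set c : ℕ → R := fun j => y (aseq j)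
  rw [Nat.add_sub_cancel, sum_sub_sum_eq_oplusProd_add c, sum_sub_sum_eq_oplusProd_add c,
    oplusProdDivDiff_comm c v u]
  linear_combination sub_mul_oplusProdDivDiff c u v (n + 1)

/-- The polynomial
`Σ_{k=1}^m ∏_{j=1}^{k−1}(x_r ⊕ y_{a_j}) ∏_{j=k+1}^m (x_{r+1} ⊕ y_{a_j})
 − Σ_{k=1}^{m−1} ∏_{j=1}^k (x_r ⊕ y_{a_j}) ∏_{j=k+1}^m (x_{r+1} ⊕ y_{a_j})`
is symmetric in `x_r` and `x_{r+1}` (here `u = x_r`, `v = x_{r+1}`). -/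
theorem stmt12 {R : Type*} [CommRing R] (m : ℕ) (y : ℕ → R) (aseq : ℕ → ℕ)
    (hpos : ∀ j, 0 < aseq j) (u v : R) :
    ((∑ k ∈ Icc 1 m,
        (∏ j ∈ Icc 1 (k - 1), oplus u (y (aseq j))) *
          ∏ j ∈ Icc (k + 1) m, oplus v (y (aseq j))) -
      ∑ k ∈ Icc 1 (m - 1),
        (∏ j ∈ Icc 1 k, oplus u (y (aseq j))) *
          ∏ j ∈ Icc (k + 1) m, oplus v (y (aseq j)))
    =
    ((∑ k ∈ Icc 1 m,
        (∏ j ∈ Icc 1 (k - 1), oplus v (y (aseq j))) *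
          ∏ j ∈ Icc (k + 1) m, oplus u (y (aseq j))) -
      ∑ k ∈ Icc 1 (m - 1),
        (∏ j ∈ Icc 1 k, oplus v (y (aseq j))) *
          ∏ j ∈ Icc (k + 1) m, oplus u (y (aseq j))) :=
  stmt12_general m y aseq u v
end

section
/- Let w ∈ S_n be 321-avoiding and (i,j) ∈ D(w). Let f = f(w) = (f_1 < ... < f_k) be the indices t with w_t > t, and let λ_r = w_{f_k} − k − (f_r − r). Let the square of the associated skew shape σ(w) corresponding to (i,j) lie in row r = i − |{t : w_t ≤ t < i}| and column c = w_{f_k} − j − |{t : w_t > t, w_t > j}| + 1. Then λ_r + f_r − c + 1 = m_{ij}(w) + i. -/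
open Finset

private lemma auxL {n : ℕ} {w : Equiv.Perm (Fin n)} (h321 : Avoids321 w)
    {t j : Fin n} (hwt : w t ≤ t) (hjt : j < w t) (hinv : t < w⁻¹ j) : False := by
  by_cases hex : ∃ a, a < t ∧ w t < w a
  · obtain ⟨a, hat, haw⟩ := hex
    exact h321 ⟨a, t, w⁻¹ j, hat, hinv, by simpa using hjt, haw⟩
  · push_neg at hex
    have hle : ∀ a ∈ Finset.Iic t, w a ∈ Finset.Iic (w t) := by
      intro a ha
      simp only [Finset.mem_Iic] at ha ⊢
      rcases eq_or_lt_of_le ha with h | h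
      · exact le_of_eq (by rw [h])
      · exact hex a h
    have hcard : (Finset.Iic t).card ≤ (Finset.Iic (w t)).card :=
      Finset.card_le_card_of_injOn w hle (w.injective.injOn)
    rw [Fin.card_Iic, Fin.card_Iic] at hcard
    have hwtt : w t = t := by
      apply Fin.ext
      have := (Fin.le_def).mp hwt
      omega
    have himg : (Finset.Iic t).image w = Finset.Iic t := by
      apply Finset.eq_of_subset_of_card_le
      · intro b hb
        obtain ⟨a, ha, rfl⟩ := Finset.mem_image.mp hb
        rw [← hwtt]; exact hle a ha
      · rw [Finset.card_image_of_injective _ w.injective]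
    have hjmem : j ∈ Finset.Iic t := by
      simp only [Finset.mem_Iic]; rw [← hwtt]; exact hjt.le
    rw [← himg] at hjmem
    obtain ⟨a, ha, hwa⟩ := Finset.mem_image.mp hjmem
    have hinva : w⁻¹ j = a := by rw [← hwa]; simp
    rw [hinva] at hinv
    exact absurd (Finset.mem_Iic.mp ha) (not_le.mpr hinv)

private lemma auxR {n : ℕ} {w : Equiv.Perm (Fin n)} (h321 : Avoids321 w)
    {t i j : Fin n} (hwt : t < w t) (hwj : w t ≤ j) (hit : i < t) (hj : j < w i) : False := by
  by_cases hex : ∃ c, t < c ∧ w c < w t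
  · obtain ⟨c, htc, hcw⟩ := hex
    exact h321 ⟨i, t, c, hit, htc, hcw, lt_of_le_of_lt hwj hj⟩
  · push_neg at hex
    have hle : ∀ b ∈ Finset.Iio (w t), w⁻¹ b ∈ Finset.Iio t := by
      intro b hb
      simp only [Finset.mem_Iio] at hb ⊢
      by_contra hc
      push_neg at hc
      rcases eq_or_lt_of_le hc with h | h
      · have hwb : w t = b := by rw [h]; simp
        rw [hwb] at hb; exact lt_irrefl _ hb
      · have h2 := hex _ h
        simp only [Equiv.Perm.coe_inv, Equiv.apply_symm_apply] at h2
        exact absurd hb h2.not_gt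
    have hcard : (Finset.Iio (w t)).card ≤ (Finset.Iio t).card :=
      Finset.card_le_card_of_injOn (fun b => w⁻¹ b) hle ((Equiv.injective w⁻¹).injOn)
    rw [Fin.card_Iio, Fin.card_Iio] at hcard
    have := (Fin.lt_def).mp hwt
    omega

/-- Let `w` be 321-avoiding and `(i,j) ∈ D(w)` (0-based; 1-based row/column are
`i+1`, `j+1` and 1-based values are `(w t)+1`).  Let `k = |{t : w_t > t}|`, let
`fk` be the last position with `w_t > t` (so `w_{f_k}` is `(w fk)+1` 1-based),
let `r = (i+1) − |{t : w_t ≤ t < i}|`, and let `fr` be the `r`-th position with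
`w_t > t` (so `f_r = fr+1` 1-based).  With
`c = w_{f_k} − (j+1) − |{t : w_t > t, w_t > j}| + 1` and
`λ_r = w_{f_k} − k − (f_r − r)`, we have `λ_r + f_r − c + 1 = m_{ij}(w) + (i+1)`. -/
theorem stmt16 {n : ℕ} (w : Equiv.Perm (Fin n)) (h321 : Avoids321 w)
    (i j : Fin n) (hij : (i, j) ∈ RD w)
    (fk : Fin n) (hfk : fk < w fk) (hfkmax : ∀ t : Fin n, t < w t → t ≤ fk)
    (r : ℕ)
    (hr : r = (i : ℕ) + 1
        - (Finset.univ.filter (fun t : Fin n => w t ≤ t ∧ t < i)).card)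
    (fr : Fin n) (hfr : fr < w fr)
    (hfrr : (Finset.univ.filter (fun t : Fin n => t < w t ∧ t ≤ fr)).card = r) :
    -- λ_r
    ((((w fk : ℕ) : ℤ) + 1
        - ((Finset.univ.filter (fun t : Fin n => t < w t)).card : ℤ)
        - (((fr : ℕ) : ℤ) + 1 - (r : ℤ)))
      -- + f_r
      + (((fr : ℕ) : ℤ) + 1)
      -- − c
      - ((((w fk : ℕ) : ℤ) + 1) - (((j : ℕ) : ℤ) + 1)
          - ((Finset.univ.filter (fun t : Fin n => t < w t ∧ j < w t)).card : ℤ) + 1)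
      + 1)
    = (mStat w i j : ℤ) + ((i : ℕ) : ℤ) + 1 := by
  have hmem := hij
  rw [RD, Finset.mem_filter] at hmem
  obtain ⟨-, hj, hi⟩ := hmem
  -- hj : j < w i, hi : i < w⁻¹ j
  have hsplit1 : (Finset.univ.filter (fun t : Fin n => t < w t)).card
      = (Finset.univ.filter (fun t : Fin n => t < w t ∧ j < w t)).card
      + (Finset.univ.filter (fun t : Fin n => t < w t ∧ w t ≤ j)).card := by
    have heq : (Finset.univ.filter (fun t : Fin n => t < w t))
        = (Finset.univ.filter (fun t : Fin n => (t < w t ∧ j < w t) ∨ (t < w t ∧ w t ≤ j))) := by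
      apply Finset.filter_congr
      intro t _
      constructor
      · intro h
        rcases le_or_gt (w t) j with h2 | h2
        · exact Or.inr ⟨h, h2⟩
        · exact Or.inl ⟨h, h2⟩
      · rintro (⟨h, -⟩ | ⟨h, -⟩) <;> exact h
    rw [heq, Finset.filter_or, Finset.card_union_of_disjoint]
    rw [Finset.disjoint_left]
    intro t ht ht2
    rw [Finset.mem_filter] at ht ht2
    exact absurd ht.2.2 ht2.2.2.not_gt
  have hsplit2 : (Finset.univ.filter (fun t : Fin n => t ≤ i ∧ w t ≤ j)).card
      = (Finset.univ.filter (fun t : Fin n => w t ≤ t ∧ t < i)).card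
      + (Finset.univ.filter (fun t : Fin n => t < w t ∧ w t ≤ j)).card := by
    have heq : (Finset.univ.filter (fun t : Fin n => t ≤ i ∧ w t ≤ j))
        = (Finset.univ.filter (fun t : Fin n => (w t ≤ t ∧ t < i) ∨ (t < w t ∧ w t ≤ j))) := by
      apply Finset.filter_congr
      intro t _
      constructor
      · rintro ⟨hti, htj⟩
        rcases le_or_gt (w t) t with h | h
        · refine Or.inl ⟨h, lt_of_le_of_ne hti fun he => ?_⟩
          rw [he] at htj
          exact absurd hj htj.not_gt
        · exact Or.inr ⟨h, htj⟩
      · rintro (⟨h1, h2⟩ | ⟨h1, h2⟩)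
        · refine ⟨h2.le, ?_⟩
          by_contra hc
          push_neg at hc
          exact auxL h321 h1 hc (h2.trans hi)
        · refine ⟨?_, h2⟩
          by_contra hc
          push_neg at hc
          exact auxR h321 h1 h2 hc hj
    rw [heq, Finset.filter_or, Finset.card_union_of_disjoint]
    rw [Finset.disjoint_left]
    intro t ht ht2
    rw [Finset.mem_filter] at ht ht2
    exact absurd ht2.2.1 ht.2.1.not_gt
  have hm1 : mStat w i j = (Finset.univ.filter (fun c : Fin n => c ≤ j ∧ i < w⁻¹ c)).card := by
    rw [mStat, RD, Finset.filter_filter]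
    apply Finset.card_bij' (fun p _ => p.2) (fun c _ => (i, c))
    case hi =>
      intro p hp
      rw [Finset.mem_filter] at hp
      obtain ⟨-, ⟨h1, h2⟩, h3, h4⟩ := hp
      rw [Finset.mem_filter]
      exact ⟨Finset.mem_univ _, h4, h3 ▸ h2⟩
    case hj =>
      intro c hc
      rw [Finset.mem_filter] at hc
      obtain ⟨-, h1, h2⟩ := hc
      rw [Finset.mem_filter]
      exact ⟨Finset.mem_univ _, ⟨lt_of_le_of_lt h1 hj, h2⟩, rfl, h1⟩
    case left_inv =>
      intro p hp
      rw [Finset.mem_filter] at hp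
      exact Prod.ext hp.2.2.1.symm rfl
    case right_inv =>
      intro c hc
      rfl
  have hm2 : (Finset.univ.filter (fun c : Fin n => c ≤ j ∧ i < w⁻¹ c)).card
      + (Finset.univ.filter (fun c : Fin n => c ≤ j ∧ w⁻¹ c ≤ i)).card = (j : ℕ) + 1 := by
    rw [← Finset.card_union_of_disjoint, ← Finset.filter_or]
    · have heq : (Finset.univ.filter
          (fun c : Fin n => (c ≤ j ∧ i < w⁻¹ c) ∨ (c ≤ j ∧ w⁻¹ c ≤ i))) = Finset.Iic j := by
        ext c
        simp only [Finset.mem_filter, Finset.mem_univ, true_and, Finset.mem_Iic]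
        constructor
        · rintro (⟨h, -⟩ | ⟨h, -⟩) <;> exact h
        · intro h
          rcases lt_or_ge i (w⁻¹ c) with h2 | h2
          · exact Or.inl ⟨h, h2⟩
          · exact Or.inr ⟨h, h2⟩
      rw [heq, Fin.card_Iic]
    · rw [Finset.disjoint_left]
      intro c hc hc2
      rw [Finset.mem_filter] at hc hc2
      exact absurd hc.2.2 hc2.2.2.not_gt
  have hbij : (Finset.univ.filter (fun c : Fin n => c ≤ j ∧ w⁻¹ c ≤ i)).card
      = (Finset.univ.filter (fun t : Fin n => t ≤ i ∧ w t ≤ j)).card := by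
    apply Finset.card_bij' (fun c _ => w⁻¹ c) (fun t _ => w t)
    case hi =>
      intro c hc
      rw [Finset.mem_filter] at hc
      rw [Finset.mem_filter]
      refine ⟨Finset.mem_univ _, hc.2.2, ?_⟩
      simpa using hc.2.1
    case hj =>
      intro t ht
      rw [Finset.mem_filter] at ht
      rw [Finset.mem_filter]
      refine ⟨Finset.mem_univ _, ht.2.2, ?_⟩
      simpa using ht.2.1
    case left_inv => intro c hc; simp
    case right_inv => intro t ht; simp
  have hBi : (Finset.univ.filter (fun t : Fin n => w t ≤ t ∧ t < i)).card ≤ (i : ℕ) := by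
    calc (Finset.univ.filter (fun t : Fin n => w t ≤ t ∧ t < i)).card
        ≤ (Finset.Iio i).card := by
          apply Finset.card_le_card
          intro t ht
          rw [Finset.mem_filter] at ht
          exact Finset.mem_Iio.mpr ht.2.2
      _ = (i : ℕ) := Fin.card_Iio i
  omega
end

section
/- If a permutation w ∈ S_n contains a 1432 pattern, witnessed by indices i_1 < i_2 < i_3 < i_4 with w_{i_1} < w_{i_4} < w_{i_3} < w_{i_2}, and (i_3, j) is the rightmost square of D(w) in row i_3, then the squares (i_2, j) and (i_2, w_{i_3}) both belong to D(w), and (i_1, j) does not belong to D(w). -/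
open Finset

/-- If `i₁ < i₂ < i₃ < i₄` witness a 1432 pattern in `w` and `(i₃, j)` is the
rightmost square of `D(w)` in row `i₃`, then `(i₂, j)` and `(i₂, w_{i₃})` are
in `D(w)`, while `(i₁, j)` is not. -/
theorem stmt17 {n : ℕ} (w : Equiv.Perm (Fin n))
    (i1 i2 i3 i4 : Fin n) (h12 : i1 < i2) (h23 : i2 < i3) (h34 : i3 < i4)
    (hv : w i1 < w i4 ∧ w i4 < w i3 ∧ w i3 < w i2)
    (j : Fin n) (hj : (i3, j) ∈ RD w) (hjmax : ∀ k : Fin n, (i3, k) ∈ RD w → k ≤ j) :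
    (i2, j) ∈ RD w ∧ (i2, w i3) ∈ RD w ∧ (i1, j) ∉ RD w := by
  obtain ⟨h14, h43, h32⟩ := hv
  simp only [RD, Finset.mem_filter, Finset.mem_univ, true_and] at hj ⊢
  obtain ⟨hjw, hji⟩ := hj
  have hi4 : w i4 ≤ j := by
    apply hjmax
    simp only [RD, Finset.mem_filter, Finset.mem_univ, true_and, Equiv.Perm.inv_def, Equiv.symm_apply_apply]
    exact ⟨h43, h34⟩
  refine ⟨⟨hjw.trans h32, h23.trans hji⟩, ?_, ?_⟩
  · simpa only [Equiv.Perm.inv_def, Equiv.symm_apply_apply] using ⟨h32, h23⟩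
  · rintro ⟨h1, -⟩
    exact absurd (h14.trans_le hi4) (not_lt_of_gt h1)
end

section
/- If w ∈ S_n contains a 1432 pattern, then there exists a column-strict balanced labeling of D(w) with labels L(i,j) ≤ i for all squares that is not weakly decreasing along rows or not strictly increasing down columns (i.e., not a flagged Rothe tableau). Consequently the set of single-valued Rothe tableaux of shape D(w) flagged by (1,...,n) is a proper subset of the set of column-strict balanced labelings of D(w) flagged by (1,...,n). -/
open Finset

/-- A single-valued Rothe tableau of shape `D(w)` flagged by `(1,…,n)`:
rows weakly decreasing, columns strictly increasing, and each (positive)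
entry in 0-based row `i` is at most `i+1`. -/
def IsSRTf {n : ℕ} (w : Equiv.Perm (Fin n)) (L : Fin n × Fin n → ℕ) : Prop :=
  (∀ i j j' : Fin n, j < j' → (i, j) ∈ RD w → (i, j') ∈ RD w → L (i, j') ≤ L (i, j)) ∧
  (∀ i i' j : Fin n, i < i' → (i, j) ∈ RD w → (i', j) ∈ RD w → L (i, j) < L (i', j)) ∧
  (∀ p ∈ RD w, 1 ≤ L p ∧ L p ≤ (p.1 : ℕ) + 1)

/-- The hook `H_{i,j}(w)`: the squares `(i',j')` of `D(w)` with
`i' = i, j' ≥ j` or `j' = j, i' ≥ i`. -/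
def hookSet {n : ℕ} (w : Equiv.Perm (Fin n)) (i j : Fin n) : Finset (Fin n × Fin n) :=
  (RD w).filter (fun p => (p.1 = i ∧ j ≤ p.2) ∨ (p.2 = j ∧ i ≤ p.1))

/-- The number of squares of the hook strictly to the right of the corner. -/
def armLen {n : ℕ} (w : Equiv.Perm (Fin n)) (i j : Fin n) : ℕ :=
  ((RD w).filter (fun p => p.1 = i ∧ j < p.2)).card

/-- `L` is a balanced labeling of `D(w)`: for each square `(i,j)`, after sorting
the labels of the hook `H_{i,j}(w)` weakly increasingly (read from right to left
along the arm and then top to bottom along the leg, so the corner occupies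
position `armLen w i j` in the sorted list), the label at the corner is
unchanged. -/
def IsBalanced {n : ℕ} (w : Equiv.Perm (Fin n)) (L : Fin n × Fin n → ℕ) : Prop :=
  ∀ i j : Fin n, (i, j) ∈ RD w →
    (Multiset.sort ((hookSet w i j).val.map L) (· ≤ ·)).getD (armLen w i j) 0 = L (i, j)

/-- A column-strict balanced labeling of `D(w)` flagged by `(1,…,n)`. -/
def IsCSBL {n : ℕ} (w : Equiv.Perm (Fin n)) (L : Fin n × Fin n → ℕ) : Prop :=
  IsBalanced w L ∧
  (∀ p ∈ RD w, ∀ q ∈ RD w, p.2 = q.2 → p ≠ q → L p ≠ L q) ∧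
  (∀ p ∈ RD w, 1 ≤ L p ∧ L p ≤ (p.1 : ℕ) + 1)

/-- `w` contains a 1432 pattern. -/
def Contains1432 {n : ℕ} (w : Equiv.Perm (Fin n)) : Prop :=
  ∃ i1 i2 i3 i4 : Fin n, i1 < i2 ∧ i2 < i3 ∧ i3 < i4 ∧
    w i1 < w i4 ∧ w i4 < w i3 ∧ w i3 < w i2

/-!
A flagged Rothe tableau is balanced because on every hook the arm labels are at most the corner
label and the leg labels exceed it.

For the strict inclusion, start from the canonical tableau `L (i, j) = i + 1` and fix a column
`j`. A square of column `j` is *armed* if its row of `D(w)` continues to the right of `j`, and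
*armless* otherwise. Give the armless squares of column `j`, top to bottom, the *free* labels
(positive integers not of the form `i + 1` for an armed row `i`) in increasing order. This keeps
the flag and column-strictness, and an armless hook stays balanced, but an armless row `f` below
an armed row `i` may now carry a label `≤ i`: a violation of increasing columns. Relabelling only
the armless rows down to the topmost violation `s` keeps every armed hook balanced, since the only
leg label below its corner is then that of `(s, j)`, which its nonempty arm absorbs.

A violation exists: for a 1432 pattern `i1 < i2 < i3 < i4` minimising `w i3 - w i4`, in column
`w i4` row `i2` is armed, row `i3` is armless, and every armless row above `i3` lies above `i2`;
as row `i1` is not in the column at all, the new label of `i3` is at most `i2`.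
-/


theorem List.Pairwise.getElem_eq_of_countP {α : Type*} [LinearOrder α] {l : List α}
    (hl : l.Pairwise (· ≤ ·)) {k : ℕ} {c : α} (hk : k < l.length)
    (h1 : l.countP (· < c) ≤ k) (h2 : k < l.countP (· ≤ c)) : l[k] = c := by
  have hsplit : l = l.take k ++ l[k] :: l.drop (k + 1) := by
    rw [← List.drop_eq_getElem_cons, List.take_append_drop]
  have hlen : (l.take k).length = k := List.length_take_of_le hk.le
  rw [hsplit, List.pairwise_append, List.pairwise_cons] at hl
  obtain ⟨-, ⟨hx, -⟩, hcross⟩ := hl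
  rw [hsplit, List.countP_append] at h1 h2
  rcases lt_trichotomy l[k] c with hlt | heq | hgt
  · have : (l.take k).countP (· < c) = k := by
      rw [List.countP_eq_length.2 fun a ha => ?_, hlen]
      exact decide_eq_true ((hcross a ha _ List.mem_cons_self).trans_lt hlt)
    rw [List.countP_cons_of_pos (by simpa using hlt)] at h1
    omega
  · exact heq
  · have : (l[k] :: l.drop (k + 1)).countP (· ≤ c) = 0 := by
      refine List.countP_eq_zero.2 fun a ha => ?_
      rcases List.mem_cons.1 ha with rfl | ha
      · simpa using hgt
      · simpa using hgt.trans_le (hx a ha)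
    have := (l.take k).countP_le_length (p := (· ≤ c))
    omega

section Hooks

variable {n : ℕ} (w : Equiv.Perm (Fin n))

def hookArm (i j : Fin n) : Finset (Fin n × Fin n) :=
  (RD w).filter fun p => p.1 = i ∧ j < p.2

def hookLeg (i j : Fin n) : Finset (Fin n × Fin n) :=
  (RD w).filter fun p => p.2 = j ∧ i < p.1

def IsBalancedAt (L : Fin n × Fin n → ℕ) (i j : Fin n) : Prop :=
  (Multiset.sort ((hookSet w i j).val.map L) (· ≤ ·)).getD (armLen w i j) 0 = L (i, j)

variable {w}

lemma mem_hookArm {p : Fin n × Fin n} {i j : Fin n} :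
    p ∈ hookArm w i j ↔ p ∈ RD w ∧ p.1 = i ∧ j < p.2 := mem_filter

lemma mem_hookLeg {p : Fin n × Fin n} {i j : Fin n} :
    p ∈ hookLeg w i j ↔ p ∈ RD w ∧ p.2 = j ∧ i < p.1 := mem_filter

lemma card_hookArm (i j : Fin n) : #(hookArm w i j) = armLen w i j := rfl

lemma hookSet_eq_insert {i j : Fin n} (hij : (i, j) ∈ RD w) :
    hookSet w i j = insert (i, j) (hookArm w i j ∪ hookLeg w i j) := by
  ext ⟨a, b⟩
  simp only [hookSet, hookArm, hookLeg, mem_filter, mem_insert, mem_union, Prod.mk.injEq]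
  constructor
  · rintro ⟨hp, ⟨rfl, hb⟩ | ⟨rfl, ha⟩⟩
    · rcases hb.eq_or_lt with rfl | hb <;> simp_all
    · rcases ha.eq_or_lt with rfl | ha <;> simp_all
  · rintro (⟨rfl, rfl⟩ | ⟨hp, rfl, hb⟩ | ⟨hp, rfl, ha⟩)
    exacts [⟨hij, .inl ⟨rfl, le_rfl⟩⟩, ⟨hp, .inl ⟨rfl, hb.le⟩⟩,
      ⟨hp, .inr ⟨rfl, ha.le⟩⟩]

lemma isBalancedAt_of_card_filter {L : Fin n × Fin n → ℕ} {i j : Fin n}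
    (h1 : #{p ∈ hookSet w i j | L p < L (i, j)} ≤ armLen w i j)
    (h2 : armLen w i j < #{p ∈ hookSet w i j | L p ≤ L (i, j)}) :
    IsBalancedAt w L i j := by
  set l := Multiset.sort ((hookSet w i j).val.map L) (· ≤ ·)
  have hcount (q : ℕ → Prop) [DecidablePred q] :
      l.countP (q ·) = #{p ∈ hookSet w i j | q (L p)} := by
    rw [← Multiset.coe_countP, Multiset.sort_eq, Multiset.countP_map, Finset.card_def,
      Finset.filter_val]
  have hk : armLen w i j < l.length := by
    simpa [l] using h2.trans_le (Finset.card_filter_le _ _)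
  rw [IsBalancedAt, List.getD_eq_getElem _ _ hk]
  exact (Multiset.pairwise_sort _ _).getElem_eq_of_countP hk
    (by rw [hcount (· < L (i, j))]; exact h1) (by rw [hcount (· ≤ L (i, j))]; exact h2)

lemma isBalancedAt_of_le_of_card_filter_lt {L : Fin n × Fin n → ℕ} {i j : Fin n}
    (hij : (i, j) ∈ RD w) (harm : ∀ p ∈ hookArm w i j, L p ≤ L (i, j))
    (hlt : #{p ∈ hookArm w i j ∪ hookLeg w i j | L p < L (i, j)} ≤ armLen w i j) :
    IsBalancedAt w L i j := by
  refine isBalancedAt_of_card_filter ?_ ?_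
  · rwa [hookSet_eq_insert hij, filter_insert, if_neg (lt_irrefl _)]
  · have hsub : insert (i, j) (hookArm w i j) ⊆ {p ∈ hookSet w i j | L p ≤ L (i, j)} := by
      rw [hookSet_eq_insert hij]
      intro p hp
      rcases mem_insert.1 hp with rfl | hp
      · simp
      · simp [hp, harm p hp]
    have hcorner : (i, j) ∉ hookArm w i j := by simp [hookArm]
    simpa [card_insert_of_notMem hcorner, card_hookArm] using card_le_card hsub

lemma isBalancedAt_of_le_arm_of_lt_leg {L : Fin n × Fin n → ℕ} {i j : Fin n}
    (hij : (i, j) ∈ RD w) (harm : ∀ p ∈ hookArm w i j, L p ≤ L (i, j))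
    (hleg : ∀ p ∈ hookLeg w i j, L (i, j) < L p) :
    IsBalancedAt w L i j := by
  refine isBalancedAt_of_le_of_card_filter_lt hij harm ?_
  rw [← card_hookArm]
  refine card_le_card fun p hp => ?_
  obtain ⟨hmem, hlt⟩ := mem_filter.1 hp
  rcases mem_union.1 hmem with harm | hleg'
  · exact harm
  · exact absurd hlt (hleg p hleg').asymm

theorem IsSRTf.isCSBL {L : Fin n × Fin n → ℕ} (h : IsSRTf w L) : IsCSBL w L := by
  obtain ⟨hrow, hcol, hflag⟩ := h
  refine ⟨fun i j hij => isBalancedAt_of_le_arm_of_lt_leg hij ?_ ?_, ?_, hflag⟩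
  · rintro ⟨a, b⟩ hp
    obtain ⟨hpD, rfl, hb⟩ := mem_hookArm.1 hp
    exact hrow a j b hb hij hpD
  · rintro ⟨a, b⟩ hp
    obtain ⟨hpD, rfl, ha⟩ := mem_hookLeg.1 hp
    exact hcol i a b ha hij hpD
  · rintro ⟨a, b⟩ hp ⟨a', b'⟩ hq (rfl : b = b') hne
    rcases lt_or_gt_of_ne fun h : a = a' => hne (h ▸ rfl) with h | h
    exacts [(hcol a a' b h hp hq).ne, (hcol a' a b h hq hp).ne']

end Hooks

section Relabel

variable {n : ℕ} (A B : Finset (Fin n))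

def IsFreeLabel (v : ℕ) : Prop := 0 < v ∧ ∀ i ∈ A, (i : ℕ) + 1 ≠ v

noncomputable def relabel (f : Fin n) : ℕ := Nat.nth (IsFreeLabel A) #{g ∈ B | g < f}

variable {A B}

lemma infinite_setOf_isFreeLabel : {v | IsFreeLabel A v}.Infinite :=
  Set.infinite_of_forall_exists_gt fun a =>
    ⟨a + n + 1, ⟨by omega, fun i _ => by have := i.isLt; omega⟩, by omega⟩

lemma isFreeLabel_relabel (f : Fin n) : IsFreeLabel A (relabel A B f) :=
  Nat.nth_mem_of_infinite infinite_setOf_isFreeLabel _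

lemma relabel_lt_relabel {f f' : Fin n} (hf : f ∈ B) (h : f < f') :
    relabel A B f < relabel A B f' := by
  refine Nat.nth_strictMono infinite_setOf_isFreeLabel (card_lt_card ?_)
  refine (ssubset_iff_of_subset fun g hg => ?_).2 ⟨f, by simp [hf, h], by simp⟩
  simp only [mem_filter] at hg ⊢
  exact ⟨hg.1, hg.2.trans h⟩

lemma relabel_le_of_lt_card {f : Fin n} {m : ℕ} (C : Finset (Fin n))
    (hC : ∀ g ∈ C, g ∉ A ∧ (g : ℕ) < m) (h : #{g ∈ B | g < f} < #C) :
    relabel A B f ≤ m := by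
  classical
  suffices #C ≤ Nat.count (IsFreeLabel A) (m + 1) by
    have := Nat.nth_lt_of_lt_count (h.trans_le this)
    rw [relabel]
    omega
  rw [Nat.count_eq_card_filter_range]
  refine card_le_card_of_injOn (fun g => (g : ℕ) + 1) (fun g hg => ?_) fun a _ b _ hab => ?_
  · obtain ⟨hgA, hgm⟩ := hC g hg
    simp only [coe_filter, mem_range, Set.mem_ofPred_eq]
    refine ⟨by omega, by omega, fun i hi he => hgA ?_⟩
    rwa [Fin.ext (Nat.succ_injective he)] at hi
  · exact Fin.ext (Nat.succ_injective hab)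

lemma relabel_le_succ (hAB : Disjoint A B) {f : Fin n} (hf : f ∈ B) :
    relabel A B f ≤ f + 1 := by
  refine relabel_le_of_lt_card {g ∈ B | g ≤ f}
    (fun g hg => ?_) (card_lt_card ((ssubset_iff_of_subset ?_).2 ⟨f, by simp [hf], by simp⟩))
  · obtain ⟨hgB, hgf⟩ := mem_filter.1 hg
    exact ⟨disjoint_right.1 hAB hgB, Nat.lt_succ_of_le hgf⟩
  · intro g hg
    simp only [mem_filter] at hg ⊢
    exact ⟨hg.1, hg.2.le⟩

end Relabel

section ColumnRelabeling

variable {n : ℕ} (w : Equiv.Perm (Fin n)) (j : Fin n)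

def armedRows : Finset (Fin n) := {i | (i, j) ∈ RD w ∧ (hookArm w i j).Nonempty}

def armlessRows : Finset (Fin n) := {i | (i, j) ∈ RD w ∧ hookArm w i j = ∅}

noncomputable def armlessLabel : Fin n → ℕ := relabel (armedRows w j) (armlessRows w j)

def IsViolation (f : Fin n) : Prop :=
  f ∈ armlessRows w j ∧ ∃ i ∈ armedRows w j, i < f ∧ armlessLabel w j f ≤ i

noncomputable def columnRelabeling (s : Fin n) (p : Fin n × Fin n) : ℕ :=
  if p.2 = j ∧ p.1 ∈ armlessRows w j ∧ p.1 ≤ s then armlessLabel w j p.1 else p.1 + 1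

variable {w j}

lemma mem_armedRows {i : Fin n} :
    i ∈ armedRows w j ↔ (i, j) ∈ RD w ∧ (hookArm w i j).Nonempty := by
  simp [armedRows]

lemma mem_armlessRows {i : Fin n} :
    i ∈ armlessRows w j ↔ (i, j) ∈ RD w ∧ hookArm w i j = ∅ := by
  simp [armlessRows]

lemma disjoint_armedRows_armlessRows : Disjoint (armedRows w j) (armlessRows w j) :=
  disjoint_left.2 fun _ hi hi' => (mem_armedRows.1 hi).2.ne_empty (mem_armlessRows.1 hi').2

lemma mem_armedRows_of_notMem_armlessRows {i : Fin n} (hij : (i, j) ∈ RD w)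
    (hi : i ∉ armlessRows w j) : i ∈ armedRows w j :=
  mem_armedRows.2 ⟨hij, nonempty_iff_ne_empty.2 fun h => hi (mem_armlessRows.2 ⟨hij, h⟩)⟩

lemma armlessLabel_lt_armlessLabel {f f' : Fin n} (hf : f ∈ armlessRows w j) (h : f < f') :
    armlessLabel w j f < armlessLabel w j f' :=
  relabel_lt_relabel hf h

lemma armlessLabel_le_succ {f : Fin n} (hf : f ∈ armlessRows w j) :
    armlessLabel w j f ≤ f + 1 :=
  relabel_le_succ disjoint_armedRows_armlessRows hf

lemma armlessLabel_ne_succ {i : Fin n} (hi : i ∈ armedRows w j) (f : Fin n) :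
    armlessLabel w j f ≠ i + 1 :=
  ((isFreeLabel_relabel f).2 i hi).symm

variable {s : Fin n}

lemma columnRelabeling_of_not {p : Fin n × Fin n}
    (h : ¬(p.2 = j ∧ p.1 ∈ armlessRows w j ∧ p.1 ≤ s)) :
    columnRelabeling w j s p = p.1 + 1 :=
  if_neg h

lemma one_le_columnRelabeling (p : Fin n × Fin n) : 1 ≤ columnRelabeling w j s p := by
  unfold columnRelabeling
  split_ifs
  exacts [(isFreeLabel_relabel _).1, Nat.le_add_left 1 _]

lemma columnRelabeling_le_succ (p : Fin n × Fin n) : columnRelabeling w j s p ≤ p.1 + 1 := by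
  unfold columnRelabeling
  split_ifs with h
  exacts [armlessLabel_le_succ h.2.1, le_rfl]

lemma columnRelabeling_lt {i i' j' : Fin n} (h : i < i')
    (hrel : j' = j ∧ i' ∈ armlessRows w j ∧ i' ≤ s → i ∈ armlessRows w j) :
    columnRelabeling w j s (i, j') < columnRelabeling w j s (i', j') := by
  by_cases hi' : j' = j ∧ i' ∈ armlessRows w j ∧ i' ≤ s
  · have hi : j' = j ∧ i ∈ armlessRows w j ∧ i ≤ s :=
      ⟨hi'.1, hrel hi', h.le.trans hi'.2.2⟩
    simp only [columnRelabeling, if_pos hi, if_pos hi']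
    exact armlessLabel_lt_armlessLabel hi.2.1 h
  · rw [columnRelabeling_of_not (p := (i', j')) hi']
    exact (columnRelabeling_le_succ _).trans_lt (by simpa using h)

lemma columnRelabeling_ne {i i' j' : Fin n} (hij : (i, j') ∈ RD w) (h : i < i') :
    columnRelabeling w j s (i, j') ≠ columnRelabeling w j s (i', j') := by
  by_cases hi : i ∈ armlessRows w j
  · exact (columnRelabeling_lt h fun _ => hi).ne
  by_cases hi' : j' = j ∧ i' ∈ armlessRows w j ∧ i' ≤ s
  · obtain ⟨rfl, -, -⟩ := id hi'
    rw [columnRelabeling_of_not (by simp [hi]), columnRelabeling, if_pos hi']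
    exact (armlessLabel_ne_succ (mem_armedRows_of_notMem_armlessRows hij hi) i').symm
  · exact (columnRelabeling_lt h fun h' => absurd h' hi').ne

lemma columnRelabeling_le_of_mem_hookArm {i j' : Fin n} {p : Fin n × Fin n}
    (hp : p ∈ hookArm w i j') : columnRelabeling w j s p ≤ columnRelabeling w j s (i, j') := by
  by_cases hc : j' = j ∧ i ∈ armlessRows w j ∧ i ≤ s
  · obtain ⟨rfl, hi, -⟩ := hc
    simp [(mem_armlessRows.1 hi).2] at hp
  · rw [columnRelabeling_of_not (p := (i, j')) hc, ← (mem_hookArm.1 hp).2.1]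
    exact columnRelabeling_le_succ p

lemma columnRelabeling_lt_of_mem_hookLeg {i j' : Fin n} (hij : (i, j') ∈ RD w)
    (hc : ¬(j' = j ∧ i ∈ armedRows w j)) {p : Fin n × Fin n} (hp : p ∈ hookLeg w i j') :
    columnRelabeling w j s (i, j') < columnRelabeling w j s p := by
  obtain ⟨a, b⟩ := p
  obtain ⟨-, rfl, hia⟩ := mem_hookLeg.1 hp
  refine columnRelabeling_lt hia fun hrel => ?_
  obtain ⟨rfl, -, -⟩ := hrel
  by_contra hi
  exact hc ⟨rfl, mem_armedRows_of_notMem_armlessRows hij hi⟩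

lemma card_filter_columnRelabeling_lt (hmin : ∀ f, IsViolation w j f → s ≤ f) {i : Fin n}
    (hi : i ∈ armedRows w j) :
    #{p ∈ hookArm w i j ∪ hookLeg w i j |
      columnRelabeling w j s p < columnRelabeling w j s (i, j)} ≤ armLen w i j := by
  have hi' : i ∉ armlessRows w j := disjoint_left.1 disjoint_armedRows_armlessRows hi
  rw [columnRelabeling_of_not (by simp [hi'])]
  calc _ ≤ #{(s, j)} := card_le_card fun p hp => ?_
    _ = 1 := card_singleton _
    _ ≤ armLen w i j := card_pos.2 (mem_armedRows.1 hi).2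
  obtain ⟨hp, hlt⟩ := mem_filter.1 hp
  obtain ⟨a, b⟩ := p
  rcases mem_union.1 hp with harm | hleg
  · obtain ⟨-, rfl, hb⟩ := mem_hookArm.1 harm
    rw [columnRelabeling_of_not (by simp [hb.ne'])] at hlt
    exact absurd hlt (lt_irrefl _)
  · obtain ⟨-, hb : b = j, hia : i < a⟩ := mem_hookLeg.1 hleg
    rw [hb] at hlt ⊢
    by_cases ha : a ∈ armlessRows w j ∧ a ≤ s
    · rw [columnRelabeling, if_pos ⟨rfl, ha⟩] at hlt
      have := hmin a ⟨ha.1, i, hi, hia, Nat.le_of_lt_succ hlt⟩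
      simp [le_antisymm ha.2 this]
    · rw [columnRelabeling_of_not (by simpa using ha)] at hlt
      exact absurd hlt (by simpa using hia.le)

theorem columnRelabeling_isCSBL (hmin : ∀ f, IsViolation w j f → s ≤ f) :
    IsCSBL w (columnRelabeling w j s) := by
  refine ⟨fun i j' hij => ?_, ?_,
    fun p _ => ⟨one_le_columnRelabeling p, columnRelabeling_le_succ p⟩⟩
  · by_cases hc : j' = j ∧ i ∈ armedRows w j
    · obtain ⟨rfl, hi⟩ := hc
      exact isBalancedAt_of_le_of_card_filter_lt hij (fun p => columnRelabeling_le_of_mem_hookArm)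
        (card_filter_columnRelabeling_lt hmin hi)
    · exact isBalancedAt_of_le_arm_of_lt_leg hij (fun p => columnRelabeling_le_of_mem_hookArm)
        (fun p => columnRelabeling_lt_of_mem_hookLeg hij hc)
  · rintro ⟨a, b⟩ hp ⟨a', b'⟩ hq (rfl : b = b') hne
    rcases lt_or_gt_of_ne fun h : a = a' => hne (h ▸ rfl) with h | h
    exacts [columnRelabeling_ne hp h, (columnRelabeling_ne hq h).symm]

theorem not_isSRTf_columnRelabeling (hs : IsViolation w j s) :
    ¬IsSRTf w (columnRelabeling w j s) := by
  rintro ⟨-, hcol, -⟩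
  obtain ⟨hsA, i, hi, his, hlab⟩ := hs
  have hi' : i ∉ armlessRows w j := disjoint_left.1 disjoint_armedRows_armlessRows hi
  have := hcol i s j his (mem_armedRows.1 hi).1 (mem_armlessRows.1 hsA).1
  rw [columnRelabeling_of_not (by simp [hi']), columnRelabeling,
    if_pos ⟨rfl, hsA, le_rfl⟩] at this
  dsimp only at this
  omega

end ColumnRelabeling

section Pattern1432

variable {n : ℕ} {w : Equiv.Perm (Fin n)}

variable (w) in
def Is1432 (i1 i2 i3 i4 : Fin n) : Prop :=
  i1 < i2 ∧ i2 < i3 ∧ i3 < i4 ∧ w i1 < w i4 ∧ w i4 < w i3 ∧ w i3 < w i2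

lemma Contains1432.exists_min_gap (hw : Contains1432 w) :
    ∃ i1 i2 i3 i4, Is1432 w i1 i2 i3 i4 ∧
      ∀ a b c d, Is1432 w a b c d → (w i3 : ℕ) - w i4 ≤ (w c : ℕ) - w d := by
  classical
  have hP : ∃ g, ∃ a b c d, Is1432 w a b c d ∧ (w c : ℕ) - w d = g :=
    let ⟨a, b, c, d, h⟩ := hw; ⟨_, a, b, c, d, h, rfl⟩
  obtain ⟨a, b, c, d, h, hg⟩ := Nat.find_spec hP
  exact ⟨a, b, c, d, h, fun a' b' c' d' h' =>
    hg ▸ Nat.find_min' hP ⟨a', b', c', d', h', rfl⟩⟩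

lemma mk_apply_mem_RD_iff {a b : Fin n} : (a, w b) ∈ RD w ↔ w b < w a ∧ a < b := by
  simp [RD]

variable {i1 i2 i3 i4 : Fin n} (hpat : Is1432 w i1 i2 i3 i4)
  (hmin : ∀ a b c d, Is1432 w a b c d → (w i3 : ℕ) - w i4 ≤ (w c : ℕ) - w d)
include hpat

lemma Is1432.second_mem_armedRows : i2 ∈ armedRows w (w i4) := by
  obtain ⟨-, h23, h34, -, h43, h32⟩ := hpat
  refine mem_armedRows.2
    ⟨mk_apply_mem_RD_iff.2 ⟨h43.trans h32, h23.trans h34⟩, ⟨(i2, w i3), ?_⟩⟩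
  exact mem_hookArm.2 ⟨mk_apply_mem_RD_iff.2 ⟨h32, h23⟩, rfl, h43⟩

include hmin

lemma Is1432.third_mem_armlessRows_of_min_gap : i3 ∈ armlessRows w (w i4) := by
  obtain ⟨h12, h23, h34, h14, h43, h32⟩ := hpat
  refine mem_armlessRows.2 ⟨mk_apply_mem_RD_iff.2 ⟨h43, h34⟩, eq_empty_of_forall_notMem ?_⟩
  rintro ⟨a, b⟩ hp
  obtain ⟨r, rfl⟩ := w.surjective b
  obtain ⟨hpD, ha : a = i3, h4r : w i4 < w r⟩ := mem_hookArm.1 hp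
  subst ha
  obtain ⟨hr3, h3r⟩ := mk_apply_mem_RD_iff.1 hpD
  have := hmin _ _ _ _ ⟨h12, h23, h3r, h14.trans h4r, hr3, h32⟩
  rw [Fin.lt_def] at h4r hr3
  omega

lemma Is1432.lt_second_of_mem_armlessRows_of_min_gap {f : Fin n} (hf : f ∈ armlessRows w (w i4))
    (hf3 : f < i3) : f < i2 := by
  obtain ⟨h12, h23, h34, h14, h43, h32⟩ := id hpat
  by_contra h2f
  have h2f : i2 < f := lt_of_le_of_ne (not_lt.1 h2f)
    fun h => disjoint_left.1 disjoint_armedRows_armlessRows (h ▸ hpat.second_mem_armedRows) hf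
  obtain ⟨hfD, hfarm⟩ := mem_armlessRows.1 hf
  obtain ⟨h4f, -⟩ := mk_apply_mem_RD_iff.1 hfD
  have hf3' : w f < w i3 := by
    refine lt_of_le_of_ne (not_lt.1 fun h3f => ?_) (w.injective.ne hf3.ne)
    have : (f, w i3) ∈ hookArm w f (w i4) :=
      mem_hookArm.2 ⟨mk_apply_mem_RD_iff.2 ⟨h3f, hf3⟩, rfl, h43⟩
    simp [hfarm] at this
  have := hmin _ _ _ _ ⟨h12, h2f, hf3.trans h34, h14, h4f, hf3'.trans h32⟩
  rw [Fin.lt_def] at h4f hf3'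
  omega

lemma Is1432.isViolation_third_of_min_gap : IsViolation w (w i4) i3 := by
  have h12 := hpat.1
  have hi1 : i1 ∉ armedRows w (w i4) ∪ armlessRows w (w i4) := by
    simp only [mem_union, mem_armedRows, mem_armlessRows, mk_apply_mem_RD_iff]
    rintro (h | h) <;> exact (hpat.2.2.2.1.trans h.1.1).false
  refine ⟨hpat.third_mem_armlessRows_of_min_gap hmin, i2, hpat.second_mem_armedRows, hpat.2.1,
    relabel_le_of_lt_card (insert i1 {g ∈ armlessRows w (w i4) | g < i2}) ?_ ?_⟩
  · intro g hg
    rcases mem_insert.1 hg with rfl | hg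
    · exact ⟨fun h => hi1 (mem_union_left _ h), h12⟩
    · obtain ⟨hgA, hg2⟩ := mem_filter.1 hg
      exact ⟨disjoint_right.1 disjoint_armedRows_armlessRows hgA, hg2⟩
  · rw [card_insert_of_notMem fun h => hi1 (mem_union_right _ (mem_filter.1 h).1)]
    refine Nat.lt_succ_of_le (card_le_card fun g hg => ?_)
    obtain ⟨hgA, hg3⟩ := mem_filter.1 hg
    exact mem_filter.2 ⟨hgA, hpat.lt_second_of_mem_armlessRows_of_min_gap hmin hgA hg3⟩

end Pattern1432

/-- If `w` contains a 1432 pattern, then every flagged single-valued Rothe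
tableau is a flagged column-strict balanced labeling, but some flagged
column-strict balanced labeling of `D(w)` is not a flagged Rothe tableau;
i.e. `SRT(w, f₀) ⊊ CSBL(w, f₀)`. -/
theorem stmt18 {n : ℕ} (w : Equiv.Perm (Fin n)) (hw : Contains1432 w) :
    (∀ L : Fin n × Fin n → ℕ, IsSRTf w L → IsCSBL w L) ∧
    (∃ L : Fin n × Fin n → ℕ, IsCSBL w L ∧ ¬ IsSRTf w L) := by
  refine ⟨fun L hL => hL.isCSBL, ?_⟩
  obtain ⟨i1, i2, i3, i4, hpat, hmin⟩ := hw.exists_min_gap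
  obtain ⟨s, hs, hsmin⟩ :=
    wellFounded_lt.has_min {f | IsViolation w (w i4) f}
      ⟨i3, hpat.isViolation_third_of_min_gap hmin⟩
  exact ⟨columnRelabeling w (w i4) s,
    columnRelabeling_isCSBL fun f hf => not_lt.1 (hsmin f hf), not_isSRTf_columnRelabeling hs⟩
end
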